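/- arXiv:1602.06996 — 4 statements merged into one kernel-verified Lean document; each statement's English description precedes it below -/
import Mathlib

section
/- Let Γ be a group, q a prime power, and ρ: Γ → GL_n(𝔽̄_q) an irreducible representation such that σ∘ρ is conjugate to ρ in GL_n(𝔽̄_q), where σ is the entrywise q-power Frobenius. Assume ρ takes values in GL_n(𝔽_{q^d}) for some d. Then ρ is conjugate to a representation valued in GL_n(𝔽_q). -/
/-!
Let `σ` be the entrywise `q`-power map on `GL_n`. From `σ ∘ ρ = g⁻¹ ρ g` one gets
`σ^k ∘ ρ = N_k⁻¹ ρ N_k` with `N_k = g σ(g) ⋯ σ^(k-1)(g)`; since `σ^d` fixes `ρ`, the matrix `N_d`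
commutes with `ρ` and is a scalar `λ` by Schur's lemma. Replacing `g` by `c g` with
`c ^ (1 + q + ⋯ + q^(d-1)) = λ⁻¹` makes `N_d = 1`, and then Hilbert 90 for `GL_n` gives `h` with
`σ(h) = h g`: the semilinear map `r ↦ σ(r) g⁻¹` on row vectors has `d`-th iterate `σ^d`, so its
fixed vectors span, and `n` independent ones are the rows of `h`. Finally
`σ(h ρ h⁻¹) = h ρ h⁻¹`.
-/

open Polynomial Finset Matrix

section TwistedNorm

variable {G : Type*}

def twistedNorm [Monoid G] (σ : G →* G) (g : G) : ℕ → G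
  | 0 => 1
  | k + 1 => twistedNorm σ g k * σ^[k] g

section Monoid

variable [Monoid G] (σ : G →* G) (g : G)

@[simp]
theorem twistedNorm_zero : twistedNorm σ g 0 = 1 := rfl

theorem twistedNorm_succ (k : ℕ) :
    twistedNorm σ g (k + 1) = twistedNorm σ g k * σ^[k] g := rfl

theorem mul_map_twistedNorm (k : ℕ) :
    g * σ (twistedNorm σ g k) = twistedNorm σ g (k + 1) := by
  induction k with
  | zero => simp [twistedNorm_succ]
  | succ k ih =>
    rw [twistedNorm_succ σ g k, map_mul, ← mul_assoc, ih, twistedNorm_succ σ g (k + 1),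
      Function.iterate_succ_apply']

end Monoid

theorem iterate_eq_conj_twistedNorm [Group G] (σ : G →* G) (g : G) {x : G}
    (hx : σ x = g⁻¹ * x * g) (k : ℕ) :
    σ^[k] x = (twistedNorm σ g k)⁻¹ * x * twistedNorm σ g k := by
  induction k with
  | zero => simp
  | succ k ih =>
    rw [Function.iterate_succ_apply, hx, iterate_map_mul, iterate_map_mul, iterate_map_inv, ih,
      twistedNorm_succ]
    group

theorem commute_twistedNorm_of_iterate_eq_self [Group G] (σ : G →* G) (g : G) {x : G}
    (hx : σ x = g⁻¹ * x * g) {k : ℕ} (hk : σ^[k] x = x) : Commute x (twistedNorm σ g k) := by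
  have h := iterate_eq_conj_twistedNorm σ g hx k
  rw [hk] at h
  calc x * twistedNorm σ g k
      = twistedNorm σ g k * ((twistedNorm σ g k)⁻¹ * x * twistedNorm σ g k) := by group
    _ = twistedNorm σ g k * x := by rw [← h]

end TwistedNorm

/- For `c ∈ s` the vector `∑ c ^ Q ^ i • ψ^[i] v` is `ψ`-fixed. A functional `f` killing the fixed
vectors but not `v` thus gives the polynomial `∑ f (ψ^[i] v) X ^ Q ^ i`, of degree `< Q ^ d`,
vanishing on `s`; so it is zero, yet its coefficient of `X` is `f v`. -/
theorem mem_span_setOf_eq_self_of_iterate_eq {K V : Type*} [Field K] [AddCommGroup V]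
    [Module K V]
    {Q d : ℕ} (hQ : 2 ≤ Q) (hd : 0 < d) (s : Finset K) (hs : ∀ c ∈ s, c ^ Q ^ d = c)
    (hcard : Q ^ d ≤ #s) (ψ : V →+ V) (hψ : ∀ (a : K) (v : V), ψ (a • v) = a ^ Q • ψ v)
    {v : V} (hv : ψ^[d] v = v) : v ∈ Submodule.span K {w | ψ w = w} := by
  by_contra hvS
  obtain ⟨f, hfv, hfS⟩ := Submodule.exists_dual_map_eq_bot_of_notMem hvS inferInstance
  have hf : ∀ w, ψ w = w → f w = 0 := fun w hw =>
    LinearMap.le_ker_iff_map.mpr hfS (Submodule.subset_span hw)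
  set F : K → ℕ → V := fun c i => c ^ Q ^ i • ψ^[i] v
  have hfixed : ∀ c ∈ s, ψ (∑ i ∈ range d, F c i) = ∑ i ∈ range d, F c i := by
    intro c hc
    have hshift : ∀ i, ψ (F c i) = F c (i + 1) := fun i => by
      simp only [F, hψ, ← pow_mul, ← pow_succ, Function.iterate_succ_apply']
    have hcycle : F c d = F c 0 := by simp [F, hv, hs c hc]
    have := (sum_range_succ' (F c) d).symm.trans (sum_range_succ (F c) d)
    rw [hcycle] at this
    rw [map_sum, sum_congr rfl fun i _ => hshift i, add_right_cancel this]
  set P : K[X] := ∑ i ∈ range d, C (f (ψ^[i] v)) * X ^ Q ^ i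
  have hPs : ∀ c ∈ s, P.eval c = 0 := by
    intro c hc
    have : P.eval c = f (∑ i ∈ range d, F c i) := by
      simp only [P, F, eval_finsetSum, map_sum, eval_mul, eval_C, eval_pow, eval_X, map_smul,
        smul_eq_mul, mul_comm]
    rw [this, hf _ (hfixed c hc)]
  have hPdeg : P.natDegree < #s := by
    have : P.natDegree ≤ Q ^ (d - 1) := by
      refine natDegree_sum_le_of_forall_le _ _ fun i hi => (natDegree_C_mul_X_pow_le _ _).trans ?_
      exact Nat.pow_le_pow_right (by omega) (by simp at hi; omega)
    have := Nat.pow_lt_pow_right (a := Q) (by omega) (Nat.sub_lt hd one_pos)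
    omega
  have hP1 : P.coeff 1 = f v := by
    rw [finsetSum_coeff, sum_eq_single 0]
    · simp
    · intro i _ hi
      rw [coeff_C_mul_X_pow, if_neg]
      exact fun h => hi ((Nat.pow_eq_one.mp h.symm).resolve_left (by omega))
    · simp [hd]
  rw [eq_zero_of_natDegree_lt_card_of_eval_eq_zero' P s hPs hPdeg, coeff_zero] at hP1
  exact hfv hP1.symm

theorem exists_finset_card_eq_of_pow_eq_self {K : Type*} [Field K] [IsAlgClosed K] (p : ℕ)
    [CharP K p] {N : ℕ} (hpN : p ∣ N) (hN : 1 < N) :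
    ∃ s : Finset K, #s = N ∧ ∀ c ∈ s, c ^ N = c := by
  have hdeg : (X ^ N - X : K[X]).natDegree = N := FiniteField.X_pow_card_sub_X_natDegree_eq K hN
  refine ⟨((X ^ N - X : K[X]).rootSet K).toFinset, ?_, fun c hc => ?_⟩
  · rw [Set.toFinset_card, card_rootSet_eq_natDegree (galois_poly_separable p N hpN)
      (IsAlgClosed.splits _), hdeg]
  · rw [Set.mem_toFinset, mem_rootSet] at hc
    simpa [sub_eq_zero] using hc.2

section Schur

variable {K V ι : Type*} [Field K] [AddCommGroup V] [Module K V]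

theorem Module.End.exists_eq_smul_one_of_commute [IsAlgClosed K] [FiniteDimensional K V]
    [Nontrivial V] (T : ι → Module.End K V)
    (hirr : ∀ W : Submodule K V, (∀ i, ∀ v ∈ W, T i v ∈ W) → W = ⊥ ∨ W = ⊤)
    (f : Module.End K V) (hf : ∀ i, Commute (T i) f) : ∃ c : K, f = c • 1 := by
  obtain ⟨c, hc⟩ := Module.End.exists_eigenvalue f
  refine ⟨c, ?_⟩
  have hinv : ∀ i, ∀ v ∈ f.eigenspace c, T i v ∈ f.eigenspace c := by
    intro i v hv
    rw [Module.End.mem_eigenspace_iff] at hv ⊢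
    rw [← Module.End.mul_apply, ← (hf i).eq, Module.End.mul_apply, hv, map_smul]
  have htop := (hirr _ hinv).resolve_left (Module.End.hasEigenvalue_iff.mp hc)
  rw [Module.End.eigenspace_def, LinearMap.ker_eq_top, sub_eq_zero] at htop
  exact htop

theorem Matrix.GeneralLinearGroup.exists_eq_scalar_of_commute [IsAlgClosed K] {n : Type*}
    [Fintype n] [DecidableEq n] (A : ι → Matrix n n K)
    (hirr : ∀ W : Submodule K (n → K), (∀ i, ∀ v ∈ W, A i *ᵥ v ∈ W) → W = ⊥ ∨ W = ⊤)
    (P : GL n K) (hP : ∀ i, Commute (A i) P) : ∃ c : Kˣ, P = scalar n c := by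
  cases isEmpty_or_nonempty n
  · exact ⟨1, Subsingleton.elim _ _⟩
  obtain ⟨c, hc⟩ := Module.End.exists_eq_smul_one_of_commute (fun i => Matrix.toLin' (A i))
    (by simpa only [Matrix.toLin'_apply] using hirr) (Matrix.toLin' P)
    fun i => by
      simpa only [Commute, SemiconjBy, Module.End.mul_eq_comp, ← Matrix.toLin'_mul]
        using congrArg Matrix.toLin' (hP i).eq
  have hPc : (P : Matrix n n K) = Matrix.scalar n c := by
    apply Matrix.toLin'.injective
    rw [hc, Matrix.scalar_apply, ← Matrix.smul_one_eq_diagonal, map_smul, Matrix.toLin'_one,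
      Module.End.one_eq_id]
  have hc0 : c ≠ 0 := by
    rintro rfl
    have := P.isUnit
    rw [hPc, map_zero] at this
    exact not_isUnit_zero this
  exact ⟨Units.mk0 c hc0, Units.ext hPc⟩

end Schur

theorem Module.Basis.exists_linearIndependent_of_span_eq_top {K V ι : Type*} [Field K]
    [AddCommGroup V] [Module K V] (b : Module.Basis ι K V) {S : Set V}
    (hS : Submodule.span K S = ⊤) : ∃ w : ι → V, LinearIndependent K w ∧ ∀ i, w i ∈ S := by
  obtain ⟨t, htS, ht, hli⟩ := exists_linearIndependent K S
  let e := b.indexEquiv (Module.Basis.mk hli (by rw [Subtype.range_coe, ht, hS]))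
  exact ⟨fun i => e i, hli.comp e e.injective, fun i => htS (e i).2⟩

namespace Matrix.GeneralLinearGroup

variable {K n : Type*} [Field K] [Fintype n] [DecidableEq n] {φ : K →+* K} {Q : ℕ}

theorem iterate_map_apply (hφ : ∀ a, φ a = a ^ Q) (k : ℕ) (u : GL n K) (i j : n) :
    (map φ)^[k] u i j = u i j ^ Q ^ k := by
  induction k with
  | zero => simp
  | succ k ih =>
    rw [Function.iterate_succ_apply', GeneralLinearGroup.map_apply, hφ, ih, ← pow_mul, pow_succ]

theorem map_scalar_of_forall_eq_pow (hφ : ∀ a, φ a = a ^ Q) (c : Kˣ) :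
    map φ (scalar n c) = scalar n (c ^ Q) := by
  ext i j
  simp only [GeneralLinearGroup.map_apply, coe_scalar, scalar_apply, diagonal_apply,
    Units.val_pow_eq_pow_val]
  split_ifs
  exacts [hφ _, map_zero φ]

theorem iterate_map_scalar (hφ : ∀ a, φ a = a ^ Q) (k : ℕ) (c : Kˣ) :
    (map φ)^[k] (scalar n c) = scalar n (c ^ Q ^ k) := by
  induction k with
  | zero => simp
  | succ k ih =>
    rw [Function.iterate_succ_apply', ih, map_scalar_of_forall_eq_pow hφ, ← pow_mul, pow_succ]

theorem twistedNorm_scalar_mul (hφ : ∀ a, φ a = a ^ Q) (c : Kˣ) (g : GL n K) (k : ℕ) :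
    twistedNorm (map φ) (scalar n c * g) k =
      scalar n (c ^ ∑ i ∈ range k, Q ^ i) * twistedNorm (map φ) g k := by
  induction k with
  | zero => simp
  | succ k ih =>
    rw [twistedNorm_succ, ih, iterate_map_mul, iterate_map_scalar hφ, twistedNorm_succ,
      sum_range_succ, pow_add, map_mul, mul_assoc, ← mul_assoc (twistedNorm _ g k),
      ← scalar_commute]
    group

theorem exists_twistedNorm_scalar_mul_eq_one [IsAlgClosed K] (hφ : ∀ a, φ a = a ^ Q)
    {d : ℕ} (hd : 0 < d) (hQ : 0 < Q) (g : GL n K) (z : Kˣ)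
    (hz : twistedNorm (map φ) g d = scalar n z) :
    ∃ c : Kˣ, twistedNorm (map φ) (scalar n c * g) d = 1 := by
  have hN : 0 < ∑ i ∈ range d, Q ^ i :=
    sum_pos (fun i _ => pow_pos hQ i) (nonempty_range_iff.mpr hd.ne')
  obtain ⟨x, hx⟩ := IsAlgClosed.exists_pow_nat_eq (z⁻¹ : Kˣ).val hN
  have hx0 : x ≠ 0 := by
    rintro rfl
    exact (z⁻¹).ne_zero (by rw [← hx, zero_pow hN.ne'])
  refine ⟨Units.mk0 x hx0, ?_⟩
  have hxz : Units.mk0 x hx0 ^ ∑ i ∈ range d, Q ^ i = z⁻¹ := Units.ext (by simpa using hx)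
  rw [twistedNorm_scalar_mul hφ, hz, hxz, ← map_mul, inv_mul_cancel, map_one]

theorem conj_scalar_mul (c : Kˣ) (g x : GL n K) :
    (scalar n c * g)⁻¹ * x * (scalar n c * g) = g⁻¹ * x * g :=
  calc (scalar n c * g)⁻¹ * x * (scalar n c * g)
      = g⁻¹ * ((scalar n c)⁻¹ * (x * scalar n c)) * g := by group
    _ = g⁻¹ * x * g := by rw [← scalar_commute, inv_mul_cancel_left]

def twistedFrobenius (φ : K →+* K) (g : GL n K) : (n → K) →+ (n → K) :=
  (vecMulLinear (g⁻¹ : GL n K).val).toAddMonoidHom.comp (φ.toAddMonoidHom.compLeft n)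

theorem twistedFrobenius_apply (g : GL n K) (r : n → K) :
    twistedFrobenius φ g r = (φ ∘ r) ᵥ* (g⁻¹ : GL n K).val := rfl

theorem twistedFrobenius_eq_self_iff (g : GL n K) (r : n → K) :
    twistedFrobenius φ g r = r ↔ φ ∘ r = r ᵥ* g.val := by
  rw [twistedFrobenius_apply]
  constructor <;> intro h
  · nth_rw 2 [← h]
    rw [vecMul_vecMul, ← Units.val_mul, inv_mul_cancel, Units.val_one, vecMul_one]
  · rw [h, vecMul_vecMul, ← Units.val_mul, mul_inv_cancel, Units.val_one, vecMul_one]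

theorem iterate_twistedFrobenius (g : GL n K) (k : ℕ) (r : n → K) :
    (twistedFrobenius φ g)^[k] r =
      (φ^[k] ∘ r) ᵥ* ((twistedNorm (map φ) g k)⁻¹ : GL n K).val := by
  induction k with
  | zero => simp
  | succ k ih =>
    have hφN : φ ∘ ((φ^[k] ∘ r) ᵥ* ((twistedNorm (map φ) g k)⁻¹ : GL n K).val) =
        (φ^[k + 1] ∘ r) ᵥ* (map φ (twistedNorm (map φ) g k)⁻¹).val := by
      funext j
      rw [Function.comp_apply, RingHom.map_vecMul, Function.iterate_succ']
      rfl
    rw [Function.iterate_succ_apply', ih, twistedFrobenius_apply, hφN, vecMul_vecMul,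
      ← Units.val_mul, ← mul_map_twistedNorm, _root_.mul_inv_rev, map_inv]

theorem exists_map_eq_mul_of_twistedNorm_eq_one (hQ : 2 ≤ Q) (hφ : ∀ a, φ a = a ^ Q) {d : ℕ}
    (hd : 0 < d) (s : Finset K) (hs : ∀ c ∈ s, c ^ Q ^ d = c) (hcard : Q ^ d ≤ #s)
    (g : GL n K) (hg : twistedNorm (map φ) g d = 1) : ∃ h : GL n K, map φ h = h * g := by
  have hspan : Submodule.span K {r | twistedFrobenius φ g r = r} = ⊤ := by
    refine top_unique ((Pi.basisFun K n).span_eq.ge.trans (Submodule.span_le.mpr ?_))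
    rintro _ ⟨j, rfl⟩
    refine mem_span_setOf_eq_self_of_iterate_eq hQ hd s hs hcard _ (fun a r => ?_) ?_
    · rw [twistedFrobenius_apply, twistedFrobenius_apply, ← hφ, ← smul_vecMul]
      congr 1
      funext i
      simp
    · rw [iterate_twistedFrobenius, hg, inv_one, Units.val_one, vecMul_one]
      funext i
      by_cases hij : i = j
      · subst hij
        simp [iterate_map_one]
      · simp [hij, iterate_map_zero]
  obtain ⟨w, hw, hwfix⟩ := (Pi.basisFun K n).exists_linearIndependent_of_span_eq_top hspan
  refine ⟨(linearIndependent_rows_iff_isUnit.mp hw).unit, Units.ext ?_⟩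
  ext i j
  exact congrFun ((twistedFrobenius_eq_self_iff g (w i)).mp (hwfix i)) j

end Matrix.GeneralLinearGroup

/-- Let `Γ` be a group, `q = p^m` a prime power, and
`ρ : Γ → GL_n(𝔽̄_q)` an irreducible representation (over the algebraically closed field
`K = 𝔽̄_q`) such that `σ ∘ ρ` is conjugate to `ρ` in `GL_n(𝔽̄_q)`, where `σ` is the entrywise
`q`-power Frobenius. Assume `ρ` takes values in `GL_n(𝔽_{q^d})` for some `d` (i.e. all matrix
entries are fixed by the `q^d`-power map). Then `ρ` is conjugate to a representation valued in
`GL_n(𝔽_q)` (i.e. with all matrix entries fixed by the `q`-power map). -/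
theorem stmt2 (Γ : Type) [Group Γ] (p m q n : ℕ) (hp : p.Prime) (hm : 0 < m) (hq : q = p ^ m)
    (K : Type) [Field K] [IsAlgClosed K] [CharP K p]
    (ρ : Γ →* GL (Fin n) K)
    (hirr : ∀ W : Submodule K (Fin n → K),
      (∀ γ : Γ, ∀ v ∈ W, ((ρ γ).val).mulVec v ∈ W) → W = ⊥ ∨ W = ⊤)
    (hconj : ∃ g : GL (Fin n) K,
      ∀ γ : Γ, ((ρ γ).val).map (fun x => x ^ q) = (g⁻¹ * ρ γ * g).val)
    (hfin : ∃ d : ℕ, 0 < d ∧ ∀ γ : Γ, ∀ i j : Fin n,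
      ((ρ γ).val i j) ^ q ^ d = (ρ γ).val i j) :
    ∃ h : GL (Fin n) K, ∀ γ : Γ, ∀ i j : Fin n,
      ((h * ρ γ * h⁻¹).val i j) ^ q = (h * ρ γ * h⁻¹).val i j := by
  have : Fact p.Prime := ⟨hp⟩
  have hq2 : 2 ≤ q := hq ▸ Nat.one_lt_pow hm.ne' hp.one_lt
  set φ := iterateFrobenius K p m
  have hφ : ∀ a, φ a = a ^ q := fun a => by rw [iterateFrobenius_def, hq]
  set σ : GL (Fin n) K →* GL (Fin n) K := GeneralLinearGroup.map φ
  obtain ⟨g₀, hg₀⟩ := hconj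
  have hσρ : ∀ γ, σ (ρ γ) = g₀⁻¹ * ρ γ * g₀ := fun γ => by
    ext i j
    rw [GeneralLinearGroup.map_apply, hφ, ← hg₀ γ]
    rfl
  obtain ⟨d, hd, hfix⟩ := hfin
  have hσdρ : ∀ γ, σ^[d] (ρ γ) = ρ γ := fun γ => by
    ext i j
    rw [GeneralLinearGroup.iterate_map_apply hφ, hfix]
  obtain ⟨z, hz⟩ := GeneralLinearGroup.exists_eq_scalar_of_commute _ hirr _ fun γ =>
    (commute_twistedNorm_of_iterate_eq_self σ g₀ (hσρ γ) (hσdρ γ)).units_val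
  obtain ⟨c, hc⟩ :=
    GeneralLinearGroup.exists_twistedNorm_scalar_mul_eq_one hφ hd (by omega) g₀ z hz
  obtain ⟨s, hs_card, hs⟩ := exists_finset_card_eq_of_pow_eq_self (K := K) p
    (hq ▸ (dvd_pow_self p hm.ne').trans (dvd_pow_self _ hd.ne')) (Nat.one_lt_pow hd.ne' hq2)
  obtain ⟨h, hh⟩ :=
    GeneralLinearGroup.exists_map_eq_mul_of_twistedNorm_eq_one hq2 hφ hd s hs hs_card.ge _ hc
  refine ⟨h, fun γ i j => ?_⟩
  have hfixed : σ (h * ρ γ * h⁻¹) = h * ρ γ * h⁻¹ := by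
    rw [map_mul, map_mul, map_inv, hh, hσρ, ← GeneralLinearGroup.conj_scalar_mul c]
    group
  rw [← hφ, ← GeneralLinearGroup.map_apply, hfixed]
end

section
/- Let G be a finite group and χ the character of an irreducible complex representation of G. Then (1/|G|²) · Σ_{x,y ∈ G} χ(x y x⁻¹ y⁻¹) = 1/χ(1). -/
/-!
For each `y`, the class sum `T_y = ∑ₓ ρ(x y x⁻¹)` commutes with `ρ(G)`, so by Schur's lemma it is a
scalar `c`; taking traces of `T_y` and of `T_y ρ(y⁻¹)` gives `|G| χ(y) = c χ(1)` and
`∑ₓ χ(x y x⁻¹ y⁻¹) = c χ(y⁻¹)`. Hence `χ(1) · ∑ₓ χ(x y x⁻¹ y⁻¹) = |G| χ(y) χ(y⁻¹)`, and summing over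
`y` with the orthogonality relation `∑_y χ(y) χ(y⁻¹) = |G|` gives `χ(1) · ∑_{x,y} χ([x,y]) = |G|²`.
-/

open CategoryTheory Module

universe u

namespace FDRep

variable {k G : Type u} [Field k] [Group G]

noncomputable def classSum [Fintype G] (V : FDRep k G) (y : G) : V ⟶ V where
  hom := FGModuleCat.ofHom (∑ x : G, V.ρ (x * y * x⁻¹))
  comm g := by
    ext1
    change (∑ x : G, V.ρ (x * y * x⁻¹)) * V.ρ g = V.ρ g * ∑ x : G, V.ρ (x * y * x⁻¹)
    simp only [Finset.sum_mul, Finset.mul_sum, ← map_mul]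
    refine Fintype.sum_equiv (Equiv.mulLeft g⁻¹) _ _ fun x => ?_
    simp only [Equiv.coe_mulLeft, mul_assoc, mul_inv_rev, inv_inv, mul_inv_cancel_left]

theorem trace_classSum [Fintype G] (V : FDRep k G) (y : G) :
    LinearMap.trace k V (classSum V y).hom.hom.hom = Fintype.card G * V.character y := by
  change LinearMap.trace k V (∑ x : G, V.ρ (x * y * x⁻¹)) = _
  rw [map_sum]
  change ∑ x : G, V.character (x * y * x⁻¹) = _
  simp only [char_conj, Finset.sum_const, Finset.card_univ, nsmul_eq_mul]

variable [IsAlgClosed k]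

theorem trace_mul_mul_finrank_of_simple {V : FDRep k G} [Simple V] (f : V ⟶ V)
    (A : Module.End k V) :
    LinearMap.trace k V (f.hom.hom.hom * A) * finrank k V =
      LinearMap.trace k V f.hom.hom.hom * LinearMap.trace k V A := by
  obtain ⟨c, rfl⟩ := endomorphism_simple_eq_smul_id k f
  change LinearMap.trace k V ((c • 1 : Module.End k V) * A) * _ = LinearMap.trace k V (c • 1) * _
  rw [smul_mul_assoc, one_mul, map_smul, map_smul, LinearMap.trace_one, smul_eq_mul, smul_eq_mul]
  ring

variable [Fintype G]

theorem sum_char_commutator_mul_char_one (V : FDRep k G) [Simple V] (y : G) :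
    (∑ x : G, V.character (x * y * x⁻¹ * y⁻¹)) * V.character 1 =
      Fintype.card G * V.character y * V.character y⁻¹ := by
  have h := trace_mul_mul_finrank_of_simple (classSum V y) (V.ρ y⁻¹)
  rw [trace_classSum] at h
  change LinearMap.trace k V ((∑ x : G, V.ρ (x * y * x⁻¹)) * V.ρ y⁻¹) * _ = _ at h
  rw [Finset.sum_mul, map_sum] at h
  rw [char_one]
  simpa only [character, ← map_mul] using h

theorem sum_char_mul_char_inv_of_simple [Invertible (Nat.card G : k)] (V : FDRep k G) [Simple V] :
    ∑ g : G, V.character g * V.character g⁻¹ = Nat.card G := by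
  have h := char_orthonormal V V
  rw [if_pos ⟨Iso.refl V⟩, inv_mul_eq_one₀ (Invertible.ne_zero _)] at h
  exact h.symm

theorem sum_sum_char_commutator_mul_char_one [Invertible (Nat.card G : k)] (V : FDRep k G)
    [Simple V] :
    (∑ x : G, ∑ y : G, V.character (x * y * x⁻¹ * y⁻¹)) * V.character 1 =
      (Fintype.card G : k) ^ 2 :=
  calc _ = ∑ y : G, (Fintype.card G : k) * (V.character y * V.character y⁻¹) := by
        rw [Finset.sum_comm, Finset.sum_mul]
        exact Finset.sum_congr rfl fun y _ => by rw [sum_char_commutator_mul_char_one, mul_assoc]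
    _ = (Fintype.card G : k) ^ 2 := by
        rw [← Finset.mul_sum, sum_char_mul_char_inv_of_simple, Nat.card_eq_fintype_card, sq]

end FDRep

/-- Let `G` be a finite group and `χ` the character of an irreducible complex
representation of `G`. Then `(1/|G|²) · Σ_{x,y ∈ G} χ(x y x⁻¹ y⁻¹) = 1/χ(1)`. -/
theorem stmt6 (G : Type) [Group G] [Fintype G] (V : FDRep ℂ G) (hV : Simple V) :
    (1 / (Fintype.card G : ℂ) ^ 2) *
        ∑ x : G, ∑ y : G, V.character (x * y * x⁻¹ * y⁻¹) = 1 / V.character 1 := by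
  have hG : (Fintype.card G : ℂ) ^ 2 ≠ 0 := pow_ne_zero 2 (Nat.cast_ne_zero.mpr Fintype.card_ne_zero)
  have : Invertible (Nat.card G : ℂ) :=
    invertibleOfNonzero (Nat.cast_ne_zero.mpr Nat.card_pos.ne')
  have hsum := FDRep.sum_sum_char_commutator_mul_char_one V
  have hχ : V.character 1 ≠ 0 := right_ne_zero_of_mul (hsum ▸ hG)
  rw [div_mul_eq_mul_div, one_mul, div_eq_div_iff hG hχ, one_mul, hsum]
end

section
/- Let Γ = ⟨x, y | x^a = y^b⟩ with a, b coprime positive integers, q a prime power with q ≡ 1 (mod ab), and A: Γ → 𝔽_q^× a one-dimensional representation. Then dim H¹(Γ, A) equals 1 if A is trivial; equals 1 if A(x^a) = A(y^b) = 1 with A(x) ≠ 1 and A(y) ≠ 1; and equals 0 otherwise. -/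
open scoped Classical

/-- The torus-knot group `Γ = ⟨x, y | x^a = y^b⟩`, with `x = PresentedGroup.of true` and
`y = PresentedGroup.of false`. -/
def torusKnotGroup (a b : ℕ) : Type :=
  PresentedGroup ({FreeGroup.of true ^ a * (FreeGroup.of false ^ b)⁻¹} : Set (FreeGroup Bool))

instance (a b : ℕ) : Group (torusKnotGroup a b) :=
  inferInstanceAs (Group (PresentedGroup _))

/-- The one-dimensional representation of `Γ` over `F` associated to a homomorphism
`χ : Γ → F^×`. -/
def repOfChar {Γ F : Type} [Group Γ] [Field F] (χ : Γ →* Fˣ) : Representation F Γ F :=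
  (Units.coeHom (Module.End F F)).comp ((Units.map (Algebra.lmul F F).toMonoidHom).comp χ)

/-!
A 1-cocycle `f` of the character `A` is determined by `α = f x` and `β = f y`. The only
constraint on `(α, β)` comes from the relation `x ^ a = y ^ b`, which reads `s_a α = s_b β` for
the geometric sums `s_a = ∑_{i<a} A(x)^i`, `s_b = ∑_{i<b} A(y)^i`; conversely every solution is
realised, by the homomorphism `Γ → F ⋊ Fˣ`, `x ↦ (α, A x)`, `y ↦ (β, A y)`. Hence `dim Z¹` is `2`
when `s_a = s_b = 0` and `1` otherwise, while `dim B¹` is `0` or `1` according as `A` is trivial or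
not. Since `q ≡ 1 (mod ab)`, the characteristic of `F` divides neither `a` nor `b`, so `s_a = 0`
exactly when `A x` is a nontrivial `a`-th root of unity.
-/

open groupCohomology Finset Module

theorem geom_sum_eq_zero_iff_of_natCast_ne_zero {K : Type*} [Field K] {w : K} {n : ℕ}
    (hn : (n : K) ≠ 0) : ∑ i ∈ range n, w ^ i = 0 ↔ w ^ n = 1 ∧ w ≠ 1 := by
  by_cases hw : w = 1
  · simp [hw, hn]
  · rw [geom_sum_eq hw, div_eq_zero_iff, sub_eq_zero, sub_eq_zero]
    tauto

theorem natCast_ne_zero_of_card_modEq_one {F : Type*} [Field F] [Fintype F] {n : ℕ}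
    (h : Fintype.card F ≡ 1 [MOD n]) : (n : F) ≠ 0 := by
  obtain ⟨m, hm⟩ := (Nat.modEq_iff_dvd' Fintype.card_pos).1 h.symm
  have : (n : F) * m = -1 := by
    rw [← Nat.cast_mul, ← hm, Nat.cast_sub Fintype.card_pos, FiniteField.cast_card_eq_zero,
      Nat.cast_one, zero_sub]
  exact left_ne_zero_of_mul (this ▸ neg_ne_zero.2 one_ne_zero)

theorem finrank_ker_smul_fst_sub_smul_snd {K : Type*} [Field K] (s t : K) :
    finrank K (LinearMap.ker (s • LinearMap.fst K K K - t • LinearMap.snd K K K)) =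
      if s = 0 ∧ t = 0 then 2 else 1 := by
  split_ifs with h
  · obtain ⟨rfl, rfl⟩ := h
    rw [zero_smul, zero_smul, sub_zero, LinearMap.ker_zero, finrank_top, finrank_prod,
      finrank_self]
  · have hne : s • LinearMap.fst K K K - t • LinearMap.snd K K K ≠ 0 := by
      intro h0
      have h1 := LinearMap.congr_fun h0 (1, 0)
      have h2 := LinearMap.congr_fun h0 (0, 1)
      simp only [LinearMap.sub_apply, LinearMap.smul_apply, LinearMap.fst_apply, smul_eq_mul,
        mul_one, LinearMap.snd_apply, mul_zero, sub_zero, LinearMap.zero_apply, zero_sub,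
        neg_eq_zero] at h1 h2
      exact h ⟨h1, h2⟩
    have := Module.Dual.finrank_ker_add_one_of_ne_zero hne
    rw [finrank_prod, finrank_self] at this
    omega

namespace groupCohomology

universe u

variable {k G : Type u} [Group G]

theorem finrank_H1_add_finrank_coboundaries₁ [Field k] (A : Rep k G)
    [FiniteDimensional k (cocycles₁ A)] :
    finrank k (H1 A) + finrank k (coboundaries₁ A) = finrank k (cocycles₁ A) := by
  have hsurj : Function.Surjective (H1π A).hom :=
    (ModuleCat.epi_iff_surjective _).1 inferInstance
  have hker : LinearMap.ker (H1π A).hom = (coboundaries₁ A).comap (cocycles₁ A).subtype := by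
    ext f
    exact H1π_eq_zero_iff f
  rw [← LinearMap.finrank_range_add_finrank_ker (H1π A).hom, LinearMap.range_eq_top.2 hsurj,
    finrank_top, hker,
    (Submodule.comapSubtypeEquivOfLe (coboundaries₁_le_cocycles₁ A)).finrank_eq]

theorem cocycles₁_eq_zero_of_closure_eq_top [CommRing k] {A : Rep k G} {s : Set G}
    (hs : Subgroup.closure s = ⊤) (f : cocycles₁ A) (hf : ∀ g ∈ s, f g = 0) : f = 0 := by
  suffices ∀ g, f g = 0 from cocycles₁_ext this
  intro g
  have hg : g ∈ Subgroup.closure s := hs ▸ Subgroup.mem_top g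
  induction hg using Subgroup.closure_induction with
  | mem g hg => exact hf g hg
  | one => exact cocycles₁_map_one f
  | mul g h _ _ hg hh => rw [(mem_cocycles₁_iff f).1 f.2, hg, hh]; simp
  | inv g _ hg =>
    have := cocycles₁_map_inv f g
    rw [hg, neg_zero] at this
    have := congrArg (A.ρ g⁻¹) this
    rwa [← Module.End.mul_apply, ← map_mul, inv_mul_cancel, map_one, Module.End.one_apply,
      map_zero] at this

end groupCohomology

section Character

variable {Γ F : Type} [Group Γ] [Field F] {χ : Γ →* Fˣ}

@[simp]
theorem repOfChar_ρ_apply (g : Γ) (z : F) :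
    (Rep.of (repOfChar χ)).ρ g z = (χ g : F) * z := rfl

theorem cocycles₁_repOfChar_map_pow (f : cocycles₁ (Rep.of (repOfChar χ))) (g : Γ) (n : ℕ) :
    f (g ^ n) = (∑ i ∈ range n, (χ g : F) ^ i) * f g := by
  induction n with
  | zero => simp
  | succ n ih =>
    rw [pow_succ, (mem_cocycles₁_iff f).1 f.2, ih, sum_range_succ, repOfChar_ρ_apply, map_pow,
      Units.val_pow_eq_pow_val]
    ring

variable (χ) in
theorem finrank_coboundaries₁_repOfChar :
    finrank F (coboundaries₁ (Rep.of (repOfChar χ))) = if χ = 1 then 0 else 1 := by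
  split_ifs with hχ
  · subst hχ
    have : (d₀₁ (Rep.of (repOfChar (1 : Γ →* Fˣ)))).hom = 0 := by
      ext : 1
      funext g
      show ((1 : Γ →* Fˣ) g : F) * 1 - 1 = 0
      simp
    rw [coboundaries₁, this, LinearMap.range_zero, finrank_bot]
  · obtain ⟨g, hg⟩ : ∃ g, χ g ≠ 1 := by
      by_contra! h
      exact hχ (MonoidHom.ext h)
    have hd : (d₀₁ (Rep.of (repOfChar χ))).hom ≠ 0 := fun h0 => by
      have : (χ g : F) * 1 - 1 = 0 := congrFun (LinearMap.congr_fun h0 1) g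
      exact hg (Units.ext (by simpa [sub_eq_zero] using this))
    rw [coboundaries₁, LinearMap.finrank_range_of_inj (LinearMap.injective_of_ne_zero hd)]
    exact finrank_self F

/-- A 1-cocycle of `repOfChar χ` is the same as a lift of `χ` to `F ⋊[unitsMulAut F] Fˣ`. -/
def unitsMulAut (F : Type) [Field F] : Fˣ →* MulAut (Multiplicative F) where
  toFun u := AddEquiv.toMultiplicative (DistribMulAction.toAddAut Fˣ F u)
  map_one' := by ext; simp
  map_mul' u v := by ext; simp [mul_smul]

theorem toAdd_unitsMulAut_apply (u : Fˣ) (m : Multiplicative F) :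
    (unitsMulAut F u m).toAdd = (u : F) * m.toAdd := rfl

theorem semidirectProduct_mk_pow (z : F) (u : Fˣ) (n : ℕ) :
    (⟨Multiplicative.ofAdd z, u⟩ : Multiplicative F ⋊[unitsMulAut F] Fˣ) ^ n =
      ⟨Multiplicative.ofAdd ((∑ i ∈ range n, (u : F) ^ i) * z), u ^ n⟩ := by
  induction n with
  | zero => rw [pow_zero, pow_zero, sum_range_zero, zero_mul, ofAdd_zero]; rfl
  | succ n ih =>
    rw [pow_succ, ih, SemidirectProduct.mul_def, pow_succ]
    congr 1
    apply Multiplicative.toAdd.injective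
    rw [toAdd_mul, toAdd_unitsMulAut_apply, sum_range_succ, Units.val_pow_eq_pow_val]
    simp only [toAdd_ofAdd]
    ring

theorem mem_cocycles₁_of_rightHom_comp_eq (Φ : Γ →* Multiplicative F ⋊[unitsMulAut F] Fˣ)
    (hΦ : SemidirectProduct.rightHom.comp Φ = χ) :
    (fun g => (Φ g).left.toAdd) ∈ cocycles₁ (Rep.of (repOfChar χ)) := by
  rw [mem_cocycles₁_iff]
  intro g h
  rw [repOfChar_ρ_apply, map_mul, SemidirectProduct.mul_left, toAdd_mul, toAdd_unitsMulAut_apply,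
    ← hΦ, add_comm]
  rfl

end Character

namespace torusKnotGroup

variable {a b : ℕ}

def x : torusKnotGroup a b := PresentedGroup.of true

def y : torusKnotGroup a b := PresentedGroup.of false

theorem x_pow_eq_y_pow : (x : torusKnotGroup a b) ^ a = y ^ b := by
  have := PresentedGroup.mk_eq_mk_of_mul_inv_mem (Set.mem_singleton
    (FreeGroup.of true ^ a * (FreeGroup.of false ^ b)⁻¹))
  rwa [map_pow, map_pow] at this

theorem map_x_pow_eq_map_y_pow {H : Type*} [Monoid H] (φ : torusKnotGroup a b →* H) :
    φ x ^ a = φ y ^ b := by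
  rw [← map_pow, ← map_pow, x_pow_eq_y_pow]

theorem hom_ext {H : Type*} [Group H] {φ ψ : torusKnotGroup a b →* H} (hx : φ x = ψ x)
    (hy : φ y = ψ y) : φ = ψ :=
  PresentedGroup.ext fun t => by cases t <;> assumption

def lift {H : Type*} [Group H] (u v : H) (h : u ^ a = v ^ b) : torusKnotGroup a b →* H :=
  PresentedGroup.toGroup (f := fun t => if t then u else v) <| by
    rintro _ rfl
    simpa [mul_inv_eq_one] using h

@[simp]
theorem lift_x {H : Type*} [Group H] (u v : H) (h : u ^ a = v ^ b) : lift u v h x = u :=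
  PresentedGroup.toGroup.of _

@[simp]
theorem lift_y {H : Type*} [Group H] (u v : H) (h : u ^ a = v ^ b) : lift u v h y = v :=
  PresentedGroup.toGroup.of _

variable {F : Type} [Field F] (χ : torusKnotGroup a b →* Fˣ)

def evalGenerators : cocycles₁ (Rep.of (repOfChar χ)) →ₗ[F] F × F where
  toFun f := (f x, f y)
  map_add' _ _ := rfl
  map_smul' _ _ := rfl

theorem evalGenerators_injective : Function.Injective (evalGenerators χ) := by
  rw [← LinearMap.ker_eq_bot, LinearMap.ker_eq_bot']
  intro f hf
  refine cocycles₁_eq_zero_of_closure_eq_top (PresentedGroup.closure_range_of _) f ?_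
  rintro _ ⟨_ | _, rfl⟩
  exacts [congrArg Prod.snd hf, congrArg Prod.fst hf]

instance : FiniteDimensional F (cocycles₁ (Rep.of (repOfChar χ))) :=
  FiniteDimensional.of_injective _ (evalGenerators_injective χ)

theorem exists_cocycle_of_geom_sum_mul_eq {α β : F}
    (h : (∑ i ∈ range a, (χ x : F) ^ i) * α = (∑ i ∈ range b, (χ y : F) ^ i) * β) :
    ∃ f : cocycles₁ (Rep.of (repOfChar χ)), f x = α ∧ f y = β := by
  have hrel : (⟨.ofAdd α, χ x⟩ : Multiplicative F ⋊[unitsMulAut F] Fˣ) ^ a =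
      ⟨.ofAdd β, χ y⟩ ^ b := by
    rw [semidirectProduct_mk_pow, semidirectProduct_mk_pow, h, map_x_pow_eq_map_y_pow]
  have hΦ : SemidirectProduct.rightHom.comp (lift _ _ hrel) = χ := hom_ext (by simp) (by simp)
  refine ⟨⟨_, mem_cocycles₁_of_rightHom_comp_eq _ hΦ⟩, ?_, ?_⟩
  · exact congrArg (fun p => p.left.toAdd) (lift_x _ _ hrel)
  · exact congrArg (fun p => p.left.toAdd) (lift_y _ _ hrel)

theorem range_evalGenerators : LinearMap.range (evalGenerators χ) =
    LinearMap.ker ((∑ i ∈ range a, (χ x : F) ^ i) • LinearMap.fst F F F -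
      (∑ i ∈ range b, (χ y : F) ^ i) • LinearMap.snd F F F) := by
  ext ⟨α, β⟩
  simp only [LinearMap.mem_range, LinearMap.mem_ker, LinearMap.sub_apply, LinearMap.smul_apply,
    LinearMap.fst_apply, LinearMap.snd_apply, smul_eq_mul, sub_eq_zero]
  constructor
  · rintro ⟨f, hf⟩
    simp only [evalGenerators, LinearMap.coe_mk, AddHom.coe_mk, Prod.mk.injEq] at hf
    rw [← hf.1, ← hf.2, ← cocycles₁_repOfChar_map_pow, ← cocycles₁_repOfChar_map_pow,
      x_pow_eq_y_pow]
  · intro h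
    obtain ⟨f, hx, hy⟩ := exists_cocycle_of_geom_sum_mul_eq χ h
    exact ⟨f, Prod.ext hx hy⟩

theorem finrank_cocycles₁_repOfChar : finrank F (cocycles₁ (Rep.of (repOfChar χ))) =
    if ∑ i ∈ range a, (χ x : F) ^ i = 0 ∧ ∑ i ∈ range b, (χ y : F) ^ i = 0 then 2 else 1 := by
  rw [LinearMap.finrank_range_of_inj (evalGenerators_injective χ) |>.symm,
    range_evalGenerators, finrank_ker_smul_fst_sub_smul_snd]

theorem finrank_H1_repOfChar (ha : (a : F) ≠ 0) (hb : (b : F) ≠ 0) :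
    finrank F (H1 (Rep.of (repOfChar χ))) =
      if χ = 1 then 1 else if χ x ^ a = 1 ∧ χ y ^ b = 1 ∧ χ x ≠ 1 ∧ χ y ≠ 1 then 1 else 0 := by
  have key := finrank_H1_add_finrank_coboundaries₁ (Rep.of (repOfChar χ))
  rw [finrank_cocycles₁_repOfChar, finrank_coboundaries₁_repOfChar,
    geom_sum_eq_zero_iff_of_natCast_ne_zero ha, geom_sum_eq_zero_iff_of_natCast_ne_zero hb,
    ← Units.val_pow_eq_pow_val, ← Units.val_pow_eq_pow_val] at key
  simp only [Ne, Units.val_eq_one] at key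
  by_cases hχ : χ = 1
  · simp [hχ] at key ⊢
    omega
  · rw [if_neg hχ] at key ⊢
    split_ifs at key ⊢ <;> first | omega | tauto

end torusKnotGroup

theorem stmt13_general (a b : ℕ)
    (F : Type) [Field F] [Fintype F] (hq : Fintype.card F ≡ 1 [MOD a * b])
    (A : torusKnotGroup a b →* Fˣ) :
    Module.finrank F (groupCohomology.H1 (Rep.of (repOfChar A))) =
      if A = 1 then 1
      else if A (PresentedGroup.of true) ^ a = 1 ∧ A (PresentedGroup.of false) ^ b = 1 ∧
          A (PresentedGroup.of true) ≠ 1 ∧ A (PresentedGroup.of false) ≠ 1 then 1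
      else 0 :=
  torusKnotGroup.finrank_H1_repOfChar A (natCast_ne_zero_of_card_modEq_one (hq.of_mul_right b))
    (natCast_ne_zero_of_card_modEq_one (hq.of_mul_left a))

/-- Let `Γ = ⟨x, y | x^a = y^b⟩` with `a, b` coprime positive integers, `q` a
prime power with `q ≡ 1 (mod ab)`, and `A : Γ → 𝔽_q^×` a one-dimensional representation.
Then `dim H¹(Γ, A)` equals `1` if `A` is trivial; equals `1` if `A(x^a) = A(y^b) = 1` with
`A(x) ≠ 1` and `A(y) ≠ 1`; and equals `0` otherwise. -/
theorem stmt13 (a b : ℕ) (ha : 0 < a) (hb : 0 < b) (hab : Nat.Coprime a b)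
    (F : Type) [Field F] [Fintype F] (hq : Fintype.card F ≡ 1 [MOD a * b])
    (A : torusKnotGroup a b →* Fˣ) :
    Module.finrank F (groupCohomology.H1 (Rep.of (repOfChar A))) =
      if A = 1 then 1
      else if A (PresentedGroup.of true) ^ a = 1 ∧ A (PresentedGroup.of false) ^ b = 1 ∧
          A (PresentedGroup.of true) ≠ 1 ∧ A (PresentedGroup.of false) ≠ 1 then 1
      else 0 :=
  stmt13_general a b F hq A
end

section
/- Let G be a finite group, χ an irreducible complex character of G, z ∈ G, and w(x₁,…,x_n) a word in n letters. Then (1/|G|ⁿ) Σ_{x₁,…,x_n ∈ G} χ(w(x₁,…,x_n)·z) = (χ(z)/χ(1)) · (1/|G|ⁿ) Σ_{x₁,…,x_n ∈ G} χ(w(x₁,…,x_n)). -/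
/-! The operator `T = ∑ₓ ρ(w(x))` commutes with the action: conjugating every letter by `g`
permutes the tuples `x` and conjugates `w(x)` by `g`. By Schur's lemma `T = c • 1`, so
`∑ₓ χ(w(x) z) = tr (T ρ(z)) = c χ(z)` and `∑ₓ χ(w(x)) = tr T = c χ(1)`. -/

open CategoryTheory

theorem FreeGroup.lift_conj {ι G : Type*} [Group G] (x : ι → G) (g : G) (w : FreeGroup ι) :
    lift (fun i => g * x i * g⁻¹) w = g * lift x w * g⁻¹ := by
  induction w using FreeGroup.induction_on with
  | C1 => simp
  | of i => simp
  | inv_of i _ => simp [mul_assoc]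
  | mul u v hu hv => rw [_root_.map_mul, _root_.map_mul, hu, hv]; group

namespace FDRep

variable {k G : Type} [Field k] [Group G]

theorem exists_eq_smul_one_of_commute [IsAlgClosed k] (V : FDRep k G) [Simple V]
    {T : Module.End k V} (hT : ∀ g, Commute T (V.ρ g)) : ∃ c : k, T = c • 1 := by
  let φ : V ⟶ V := ⟨FGModuleCat.ofHom T, fun g => by ext v; exact LinearMap.congr_fun (hT g) v⟩
  obtain ⟨c, hc⟩ := endomorphism_simple_eq_smul_id k φ
  exact ⟨c, (congrArg (fun f : V ⟶ V => f.hom.hom.hom) hc).symm⟩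

theorem trace_mul_ρ_mul_char_one [IsAlgClosed k] (V : FDRep k G) [Simple V]
    {T : Module.End k V} (hT : ∀ g, Commute T (V.ρ g)) (g : G) :
    LinearMap.trace k V (T * V.ρ g) * V.character 1 = V.character g * LinearMap.trace k V T := by
  obtain ⟨c, rfl⟩ := V.exists_eq_smul_one_of_commute hT
  simp only [character, smul_mul_assoc, one_mul, map_smul, map_one, LinearMap.trace_one,
    smul_eq_mul]
  ring

theorem finrank_ne_zero_of_simple (V : FDRep k G) [Simple V] : Module.finrank k V ≠ 0 := by
  intro h
  have := Module.finrank_zero_iff.mp h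
  exact id_nonzero V (by ext v; exact Subsingleton.elim _ _)

theorem commute_sum_ρ_lift {ι : Type*} [Fintype ι] [DecidableEq ι] [Fintype G] (V : FDRep k G)
    (w : FreeGroup ι) (g : G) : Commute (∑ x : ι → G, V.ρ (FreeGroup.lift x w)) (V.ρ g) := by
  rw [Commute, SemiconjBy, Finset.sum_mul, Finset.mul_sum]
  refine Fintype.sum_equiv (Equiv.piCongrRight fun _ : ι => (MulAut.conj g⁻¹).toEquiv) _ _
    fun x => ?_
  change _ = V.ρ g * V.ρ (FreeGroup.lift (fun i => g⁻¹ * x i * g⁻¹⁻¹) w)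
  rw [FreeGroup.lift_conj, ← map_mul, ← map_mul]
  group

end FDRep

/-- Let `G` be a finite group, `χ` an irreducible complex character of `G`,
`z ∈ G`, and `w(x₁,…,x_n)` a word in `n` letters (an element of the free group `F_n`,
evaluated at tuples of elements of `G`). Then
`(1/|G|ⁿ) Σ_{x₁,…,x_n} χ(w(x₁,…,x_n)·z) = (χ(z)/χ(1)) · (1/|G|ⁿ) Σ_{x₁,…,x_n} χ(w(x₁,…,x_n))`. -/
theorem stmt18 (G : Type) [Group G] [Fintype G] (V : FDRep ℂ G) (hV : Simple V)
    (n : ℕ) (w : FreeGroup (Fin n)) (z : G) :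
    (1 / (Fintype.card G : ℂ) ^ n) *
        ∑ x : Fin n → G, V.character (FreeGroup.lift x w * z) =
      (V.character z / V.character 1) *
        ((1 / (Fintype.card G : ℂ) ^ n) *
          ∑ x : Fin n → G, V.character (FreeGroup.lift x w)) := by
  set T := ∑ x : Fin n → G, V.ρ (FreeGroup.lift x w)
  have hsum_mul : ∑ x : Fin n → G, V.character (FreeGroup.lift x w * z) =
      LinearMap.trace ℂ V (T * V.ρ z) := by
    simp [T, FDRep.character, Finset.sum_mul]
  have hsum : ∑ x : Fin n → G, V.character (FreeGroup.lift x w) = LinearMap.trace ℂ V T := by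
    simp [T, FDRep.character]
  have hschur := V.trace_mul_ρ_mul_char_one (V.commute_sum_ρ_lift w) z
  have hdim : V.character 1 ≠ 0 := by
    simpa [FDRep.char_one] using V.finrank_ne_zero_of_simple
  rw [hsum_mul, hsum]
  field_simp
  linear_combination hschur
end
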